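/- Let n and k be integers with 1 ≤ k < n and let p be a real number with p ≥ n/k (so in particular p > 1). Define f(x) = (2 + |x|)^{−n/p} (log(2 + |x|))^{−1} for x ∈ ℝⁿ. Then f ∈ L^p(ℝⁿ), while for every s ≥ 0, ∫_{ℝ^k} (2 + √(|u|² + s²))^{−n/p} (log(2 + √(|u|² + s²)))^{−1} du = +∞; in other words, the integral of f over every k-dimensional affine plane in ℝⁿ diverges. -/

import Mathlib

open MeasureTheory Set Metric Filter
open scoped ENNReal NNReal

namespace SolmonAux

/-- Polar-coordinate formula for the Lebesgue integral of a radial function. -/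
theorem lintegral_fun_norm_addHaar {E : Type*} [NormedAddCommGroup E] [NormedSpace ℝ E]
    [MeasurableSpace E] [BorelSpace E] [Nontrivial E] [FiniteDimensional ℝ E]
    (μ : Measure E) [μ.IsAddHaarMeasure] (f : ℝ → ℝ≥0∞) (hf : Measurable f) :
    ∫⁻ x, f ‖x‖ ∂μ
      = (Module.finrank ℝ E) * μ (ball (0 : E) 1) *
        ∫⁻ y in Ioi (0:ℝ), ENNReal.ofReal (y ^ (Module.finrank ℝ E - 1)) * f y := by
  have h0 : MeasurableSet ({0}ᶜ : Set E) := (measurableSet_singleton 0).compl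
  have hmeas2 : Measurable fun q : sphere (0:E) 1 × Ioi (0:ℝ) => f q.2.1 :=
    hf.comp (measurable_subtype_coe.comp measurable_snd)
  calc
    ∫⁻ x, f ‖x‖ ∂μ = ∫⁻ x in ({0}ᶜ : Set E), f ‖x‖ ∂μ := by
      rw [restrict_compl_singleton]
    _ = ∫⁻ x : ({0}ᶜ : Set E), f ‖x.1‖ ∂(μ.comap Subtype.val) :=
      (lintegral_subtype_comap h0 (fun a => f ‖a‖)).symm
    _ = ∫⁻ q : sphere (0:E) 1 × Ioi (0:ℝ), f q.2.1
          ∂(μ.toSphere.prod (Measure.volumeIoiPow (Module.finrank ℝ E - 1))) := by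
      rw [← μ.measurePreserving_homeomorphUnitSphereProd.lintegral_comp hmeas2]
      exact lintegral_congr fun x => by simp [homeomorphUnitSphereProd, homeomorphSphereProd]
    _ = μ.toSphere univ *
          ∫⁻ r : Ioi (0:ℝ), f r.1 ∂(Measure.volumeIoiPow (Module.finrank ℝ E - 1)) := by
      rw [lintegral_prod _ hmeas2.aemeasurable]
      simp [lintegral_const, mul_comm]
    _ = (Module.finrank ℝ E) * μ (ball (0 : E) 1) *
        ∫⁻ y in Ioi (0:ℝ), ENNReal.ofReal (y ^ (Module.finrank ℝ E - 1)) * f y := by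
      rw [μ.toSphere_apply_univ, Measure.volumeIoiPow,
        lintegral_withDensity_eq_lintegral_mul _
          ((measurable_subtype_coe.pow_const _).ennreal_ofReal)
          (show Measurable fun r : Ioi (0:ℝ) => f r.1 from hf.comp measurable_subtype_coe)]
      simp only [Pi.mul_apply]
      congr 1
      exact lintegral_subtype_comap measurableSet_Ioi
        (fun y => ENNReal.ofReal (y ^ (Module.finrank ℝ E - 1)) * f y)

theorem lintegral_norm_euclidean (m : ℕ) (hm : 0 < m) (f : ℝ → ℝ≥0∞) (hf : Measurable f) :
    ∫⁻ x : EuclideanSpace ℝ (Fin m), f ‖x‖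
      = m * volume (ball (0 : EuclideanSpace ℝ (Fin m)) 1) *
        ∫⁻ y in Ioi (0:ℝ), ENNReal.ofReal (y ^ (m - 1)) * f y := by
  haveI : Nontrivial (EuclideanSpace ℝ (Fin m)) :=
    Module.nontrivial_of_finrank_pos (by rw [finrank_euclideanSpace_fin]; exact hm)
  simpa [finrank_euclideanSpace_fin] using
    lintegral_fun_norm_addHaar (volume : Measure (EuclideanSpace ℝ (Fin m))) f hf

/-- `(2+y)⁻¹ (log (2+y))^{-p}` is integrable on `(0, ∞)` for `p > 1`. -/
theorem aux_int {p : ℝ} (hp : 1 < p) :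
    IntegrableOn (fun y : ℝ => (2 + y)⁻¹ * Real.log (2 + y) ^ (-p)) (Ioi (0:ℝ)) := by
  have hp1 : p - 1 ≠ 0 := by intro h; linarith [sub_eq_zero.1 h]
  have hderiv : ∀ y ∈ Ici (0:ℝ),
      HasDerivAt (fun y : ℝ => -(Real.log (2 + y) ^ (1 - p)) / (p - 1))
        ((2 + y)⁻¹ * Real.log (2 + y) ^ (-p)) y := by
    intro y hy
    have hy0 : (0:ℝ) ≤ y := hy
    have hB : (0:ℝ) < 2 + y := by linarith
    have hL : 0 < Real.log (2 + y) := Real.log_pos (by linarith)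
    have d1 : HasDerivAt (fun y : ℝ => 2 + y) 1 y := (hasDerivAt_id y).const_add 2
    have d2 : HasDerivAt (fun y : ℝ => Real.log (2 + y)) ((2 + y)⁻¹ * 1) y :=
      (Real.hasDerivAt_log hB.ne').comp y d1
    have d3 : HasDerivAt (fun y : ℝ => Real.log (2 + y) ^ (1 - p))
        ((1 - p) * Real.log (2 + y) ^ (1 - p - 1) * ((2 + y)⁻¹ * 1)) y :=
      by have := (Real.hasDerivAt_rpow_const (p := 1 - p) (Or.inl hL.ne')).comp y d2; exact this
    have d4 := (d3.neg).div_const (p - 1)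
    refine HasDerivAt.congr_deriv d4 ?_
    rw [show (1:ℝ) - p - 1 = -p by ring]
    field_simp
    ring
  have hnn : ∀ y ∈ Ioi (0:ℝ), 0 ≤ (2 + y)⁻¹ * Real.log (2 + y) ^ (-p) := by
    intro y hy
    have hB : (0:ℝ) < 2 + y := by have := hy.out; linarith
    have hL : 0 ≤ Real.log (2 + y) := Real.log_nonneg (by have := hy.out; linarith)
    exact mul_nonneg (inv_nonneg.2 hB.le) (Real.rpow_nonneg hL _)
  have t1 : Tendsto (fun y : ℝ => 2 + y) atTop atTop :=
    tendsto_atTop_add_const_left _ 2 tendsto_id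
  have t2 : Tendsto (fun y : ℝ => Real.log (2 + y)) atTop atTop :=
    Real.tendsto_log_atTop.comp t1
  have t3 : Tendsto (fun x : ℝ => x ^ (1 - p)) atTop (nhds 0) := by
    have h := tendsto_rpow_neg_atTop (show (0:ℝ) < p - 1 by linarith)
    rwa [show -(p - 1) = 1 - p by ring] at h
  have t4 : Tendsto (fun y : ℝ => -(Real.log (2 + y) ^ (1 - p)) / (p - 1)) atTop
      (nhds (-(0:ℝ) / (p - 1))) := ((t3.comp t2).neg).div_const (p - 1)
  exact integrableOn_Ioi_deriv_of_nonneg' hderiv hnn t4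

/-- Divergence of `∫ c/(y log(4y))` on `(a, ∞)` for `a ≥ 1`, `c > 0`. -/
theorem aux_div {a c : ℝ} (ha : 1 ≤ a) (hc : 0 < c) :
    ∫⁻ y in Ioi a, ENNReal.ofReal (c * (y * Real.log (4 * y))⁻¹) = ⊤ := by
  have hderiv : ∀ y, 1 ≤ y → HasDerivAt (fun z : ℝ => Real.log (Real.log (4 * z)))
      ((y * Real.log (4 * y))⁻¹) y := by
    intro y hy
    have hy0 : (0:ℝ) < y := by linarith
    have h4y : (1:ℝ) < 4 * y := by linarith
    have hL : 0 < Real.log (4 * y) := Real.log_pos h4y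
    have d1 : HasDerivAt (fun z : ℝ => 4 * z) 4 y := by
      simpa using (hasDerivAt_id y).const_mul 4
    have d2 : HasDerivAt (fun z : ℝ => Real.log (4 * z)) ((4 * y)⁻¹ * 4) y :=
      (Real.hasDerivAt_log (by positivity)).comp y d1
    have d3 : HasDerivAt (fun z : ℝ => Real.log (Real.log (4 * z)))
        ((Real.log (4 * y))⁻¹ * ((4 * y)⁻¹ * 4)) y :=
      by have := (Real.hasDerivAt_log hL.ne').comp y d2; exact this
    convert d3 using 1
    rw [mul_inv]
    field_simp
  apply ENNReal.eq_top_of_forall_nnreal_le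
  intro r
  have t1 : Tendsto (fun y : ℝ => 4 * y) atTop atTop :=
    tendsto_id.const_mul_atTop (by norm_num)
  have t2 : Tendsto (fun y : ℝ => Real.log (Real.log (4 * y))) atTop atTop :=
    Real.tendsto_log_atTop.comp (Real.tendsto_log_atTop.comp t1)
  have T : Tendsto (fun b : ℝ =>
      c * (Real.log (Real.log (4 * b)) - Real.log (Real.log (4 * a)))) atTop atTop := by
    have T0 := tendsto_atTop_add_const_right atTop (-(Real.log (Real.log (4 * a)))) t2
    simp only [← sub_eq_add_neg] at T0
    exact T0.const_mul_atTop hc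
  obtain ⟨b, hrb, hab⟩ :=
    ((T.eventually_ge_atTop (r : ℝ)).and (eventually_gt_atTop a)).exists
  have hab' : a ≤ b := hab.le
  have hcont : ContinuousOn (fun y : ℝ => (y * Real.log (4 * y))⁻¹) (Icc a b) := by
    apply ContinuousOn.inv₀
    · exact continuousOn_id.mul ((continuousOn_const.mul continuousOn_id).log
        (fun x hx => ne_of_gt (by simp only [Pi.mul_apply, id_eq]; nlinarith [hx.1, ha])))
    · intro x hx
      have hx1 : 1 ≤ x := le_trans ha hx.1
      have hL : 0 < Real.log (4 * x) := Real.log_pos (by linarith)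
      exact (mul_pos (by linarith) hL).ne'
  have hInt : IntervalIntegrable (fun y : ℝ => (y * Real.log (4 * y))⁻¹) volume a b := by
    apply ContinuousOn.intervalIntegrable
    rwa [uIcc_of_le hab']
  have hFTC : ∫ y in a..b, (y * Real.log (4 * y))⁻¹
      = Real.log (Real.log (4 * b)) - Real.log (Real.log (4 * a)) := by
    apply intervalIntegral.integral_eq_sub_of_hasDerivAt
    · intro x hx
      rw [uIcc_of_le hab'] at hx
      exact hderiv x (le_trans ha hx.1)
    · exact hInt
  have hIoc : ∫ y in Ioc a b, c * (y * Real.log (4 * y))⁻¹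
      = c * (Real.log (Real.log (4 * b)) - Real.log (Real.log (4 * a))) := by
    rw [integral_const_mul c, ← intervalIntegral.integral_of_le hab', hFTC]
  have hIntc : IntegrableOn (fun y : ℝ => c * (y * Real.log (4 * y))⁻¹) (Ioc a b) volume :=
    ((intervalIntegrable_iff_integrableOn_Ioc_of_le hab').1 hInt).const_mul c
  have hnn : (0 : ℝ → ℝ) ≤ᵐ[volume.restrict (Ioc a b)]
      fun y => c * (y * Real.log (4 * y))⁻¹ := by
    filter_upwards [ae_restrict_mem measurableSet_Ioc] with y hy
    simp only [Pi.zero_apply]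
    have hy1 : 1 ≤ y := le_trans ha hy.1.le
    have hL : 0 < Real.log (4 * y) := Real.log_pos (by linarith)
    exact mul_nonneg hc.le (inv_nonneg.2 (mul_nonneg (by linarith) hL.le))
  calc (r : ℝ≥0∞) = ENNReal.ofReal (r : ℝ) := (ENNReal.ofReal_coe_nnreal).symm
    _ ≤ ENNReal.ofReal (c * (Real.log (Real.log (4 * b)) - Real.log (Real.log (4 * a)))) :=
      ENNReal.ofReal_le_ofReal hrb
    _ = ∫⁻ y in Ioc a b, ENNReal.ofReal (c * (y * Real.log (4 * y))⁻¹) := by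
      rw [← hIoc]; exact ofReal_integral_eq_lintegral_ofReal hIntc hnn
    _ ≤ ∫⁻ y in Ioi a, ENNReal.ofReal (c * (y * Real.log (4 * y))⁻¹) :=
      lintegral_mono' (Measure.restrict_mono Ioc_subset_Ioi_self le_rfl) le_rfl

end SolmonAux

open SolmonAux

/-- Solmon's example: for `p ≥ n/k`, the function
`f(x) = (2+|x|)^{-n/p} (log(2+|x|))^{-1}` belongs to `L^p(ℝⁿ)`, yet its integral over
every `k`-dimensional affine plane (at distance `s ≥ 0` from the origin, written as an
integral over `ℝ^k`) diverges. -/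
theorem stmt_19 (n k : ℕ) (hk : 1 ≤ k) (hkn : k < n)
    (p : ℝ) (hp : (n : ℝ) / k ≤ p) :
    MemLp (fun x : EuclideanSpace ℝ (Fin n) =>
        (2 + ‖x‖) ^ (-(n : ℝ) / p) * (Real.log (2 + ‖x‖))⁻¹)
      (ENNReal.ofReal p) ∧
    ∀ s : ℝ, 0 ≤ s →
      (∫⁻ u : EuclideanSpace ℝ (Fin k),
          ENNReal.ofReal ((2 + Real.sqrt (‖u‖ ^ 2 + s ^ 2)) ^ (-(n : ℝ) / p) *
            (Real.log (2 + Real.sqrt (‖u‖ ^ 2 + s ^ 2)))⁻¹)) = ⊤ := by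
  have hk0 : (0:ℝ) < k := by exact_mod_cast hk
  have hkn' : (k:ℝ) < n := by exact_mod_cast hkn
  have hn1 : 1 < (n:ℝ) / k := (one_lt_div hk0).2 hkn'
  have hp1 : 1 < p := lt_of_lt_of_le hn1 hp
  have hp0 : 0 < p := by linarith
  have hnk : (n:ℝ) ≤ p * k := (div_le_iff₀ hk0).1 hp
  have hnp : (n:ℝ) / p ≤ k := (div_le_iff₀ hp0).2 (by nlinarith)
  have hn0 : 0 < n := lt_trans hk hkn
  constructor
  · -- Part 1: membership in L^p
    have hbase_ne : ∀ x : EuclideanSpace ℝ (Fin n), (2 + ‖x‖) ≠ 0 := fun x => by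
      positivity
    have hlog_pos : ∀ x : EuclideanSpace ℝ (Fin n), 0 < Real.log (2 + ‖x‖) := fun x =>
      Real.log_pos (by have := norm_nonneg x; linarith)
    have hcont : Continuous (fun x : EuclideanSpace ℝ (Fin n) =>
        (2 + ‖x‖) ^ (-(n : ℝ) / p) * (Real.log (2 + ‖x‖))⁻¹) := by
      have hb : Continuous fun x : EuclideanSpace ℝ (Fin n) => 2 + ‖x‖ :=
        continuous_const.add continuous_norm
      exact (hb.rpow_const fun x => Or.inl (hbase_ne x)).mul
        ((hb.log fun x => hbase_ne x).inv₀ fun x => (hlog_pos x).ne')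
    refine ⟨hcont.aestronglyMeasurable, ?_⟩
    rw [eLpNorm_lt_top_iff_lintegral_rpow_enorm_lt_top
      (ENNReal.ofReal_pos.2 hp0).ne' ENNReal.ofReal_ne_top, ENNReal.toReal_ofReal hp0.le]
    have hb : Continuous fun y : ℝ => 2 + |y| := continuous_const.add continuous_abs
    have hbne : ∀ y : ℝ, 2 + |y| ≠ 0 := fun y => by positivity
    have hlogb : ∀ y : ℝ, 0 < Real.log (2 + |y|) := fun y =>
      Real.log_pos (by have := abs_nonneg y; linarith)
    have hcont_g : Continuous (fun y : ℝ =>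
        ((2 + |y|) ^ (-(n : ℝ) / p) * (Real.log (2 + |y|))⁻¹) ^ p) :=
      ((hb.rpow_const fun y => Or.inl (hbne y)).mul
        ((hb.log hbne).inv₀ fun y => (hlogb y).ne')).rpow_const fun y => Or.inr hp0.le
    have hg_meas : Measurable (fun y : ℝ =>
        ENNReal.ofReal (((2 + |y|) ^ (-(n : ℝ) / p) * (Real.log (2 + |y|))⁻¹) ^ p)) :=
      hcont_g.measurable.ennreal_ofReal
    have hcont_b : Continuous (fun y : ℝ => (2 + |y|)⁻¹ * Real.log (2 + |y|) ^ (-p)) :=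
      (hb.inv₀ hbne).mul ((hb.log hbne).rpow_const fun y => Or.inl (hlogb y).ne')
    have hptwise : ∀ x : EuclideanSpace ℝ (Fin n),
        ((‖(2 + ‖x‖) ^ (-(n : ℝ) / p) * (Real.log (2 + ‖x‖))⁻¹‖₊ : ℝ≥0∞)) ^ p
          = ENNReal.ofReal
              (((2 + |‖x‖|) ^ (-(n : ℝ) / p) * (Real.log (2 + |‖x‖|))⁻¹) ^ p) := by
      intro x
      have hfx : 0 ≤ (2 + ‖x‖) ^ (-(n : ℝ) / p) * (Real.log (2 + ‖x‖))⁻¹ :=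
        mul_nonneg (Real.rpow_nonneg (by have := norm_nonneg x; linarith) _)
          (inv_nonneg.2 (hlog_pos x).le)
      rw [abs_of_nonneg (norm_nonneg x), ← enorm_eq_nnnorm, Real.enorm_eq_ofReal hfx,
        ENNReal.ofReal_rpow_of_nonneg hfx hp0.le]
    calc ∫⁻ x : EuclideanSpace ℝ (Fin n),
          ((‖(2 + ‖x‖) ^ (-(n : ℝ) / p) * (Real.log (2 + ‖x‖))⁻¹‖₊ : ℝ≥0∞)) ^ p
        = ∫⁻ x : EuclideanSpace ℝ (Fin n),
            ENNReal.ofReal (((2 + |‖x‖|) ^ (-(n : ℝ) / p) * (Real.log (2 + |‖x‖|))⁻¹) ^ p) :=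
        lintegral_congr hptwise
      _ = n * volume (ball (0 : EuclideanSpace ℝ (Fin n)) 1) *
            ∫⁻ y in Ioi (0:ℝ), ENNReal.ofReal (y ^ (n - 1)) *
              ENNReal.ofReal (((2 + |y|) ^ (-(n : ℝ) / p) * (Real.log (2 + |y|))⁻¹) ^ p) :=
        lintegral_norm_euclidean n hn0 _ hg_meas
      _ < ⊤ := by
        apply ENNReal.mul_lt_top
        · exact ENNReal.mul_lt_top (ENNReal.natCast_lt_top n) measure_ball_lt_top
        have hbound : ∀ y ∈ Ioi (0:ℝ),
            ENNReal.ofReal (y ^ (n - 1)) *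
              ENNReal.ofReal (((2 + |y|) ^ (-(n : ℝ) / p) * (Real.log (2 + |y|))⁻¹) ^ p)
              ≤ ENNReal.ofReal ((2 + |y|)⁻¹ * Real.log (2 + |y|) ^ (-p)) := by
          intro y hy
          have hy0 : (0:ℝ) < y := hy
          have hB : (0:ℝ) < 2 + y := by linarith
          have hL : 0 < Real.log (2 + y) := Real.log_pos (by linarith)
          rw [abs_of_nonneg hy0.le, ← ENNReal.ofReal_mul (pow_nonneg hy0.le _)]
          apply ENNReal.ofReal_le_ofReal
          have hexp : ((2 + y) ^ (-(n:ℝ) / p) * (Real.log (2 + y))⁻¹) ^ p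
              = (2 + y) ^ (-(n:ℝ)) * Real.log (2 + y) ^ (-p) := by
            rw [Real.mul_rpow (Real.rpow_nonneg hB.le _) (inv_nonneg.2 hL.le),
              ← Real.rpow_mul hB.le, div_mul_cancel₀ _ hp0.ne',
              Real.inv_rpow hL.le, ← Real.rpow_neg hL.le]
          have hyB : y ^ (n - 1) ≤ (2 + y) ^ (n - 1) :=
            pow_le_pow_left₀ hy0.le (by linarith) _
          have hBid : (2 + y) ^ (n - 1) * (2 + y) ^ (-(n:ℝ)) = (2 + y)⁻¹ := by
            rw [← Real.rpow_natCast (2 + y) (n - 1), ← Real.rpow_add hB,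
              ← Real.rpow_neg_one (2 + y)]
            congr 1
            rw [Nat.cast_sub hn0]
            push_cast
            ring
          calc y ^ (n - 1) * (((2 + y) ^ (-(n:ℝ) / p) * (Real.log (2 + y))⁻¹) ^ p)
              = y ^ (n - 1) * ((2 + y) ^ (-(n:ℝ)) * Real.log (2 + y) ^ (-p)) := by rw [hexp]
            _ ≤ (2 + y) ^ (n - 1) * ((2 + y) ^ (-(n:ℝ)) * Real.log (2 + y) ^ (-p)) :=
              mul_le_mul_of_nonneg_right hyB
                (mul_nonneg (Real.rpow_nonneg hB.le _) (Real.rpow_nonneg hL.le _))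
            _ = ((2 + y) ^ (n - 1) * (2 + y) ^ (-(n:ℝ))) * Real.log (2 + y) ^ (-p) := by
              ring
            _ = (2 + y)⁻¹ * Real.log (2 + y) ^ (-p) := by rw [hBid]
        calc ∫⁻ y in Ioi (0:ℝ), ENNReal.ofReal (y ^ (n - 1)) *
              ENNReal.ofReal (((2 + |y|) ^ (-(n : ℝ) / p) * (Real.log (2 + |y|))⁻¹) ^ p)
            ≤ ∫⁻ y in Ioi (0:ℝ), ENNReal.ofReal ((2 + |y|)⁻¹ * Real.log (2 + |y|) ^ (-p)) :=
            setLIntegral_mono hcont_b.measurable.ennreal_ofReal hbound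
          _ = ∫⁻ y in Ioi (0:ℝ), ENNReal.ofReal ((2 + y)⁻¹ * Real.log (2 + y) ^ (-p)) :=
            setLIntegral_congr_fun measurableSet_Ioi
              (fun y hy => by rw [abs_of_nonneg (le_of_lt hy)])
          _ < ⊤ := (aux_int hp1).lintegral_lt_top
  · -- Part 2: divergence over every k-plane
    intro s hs
    have hb2 : Continuous fun r : ℝ => 2 + Real.sqrt (r ^ 2 + s ^ 2) :=
      continuous_const.add (Real.continuous_sqrt.comp ((continuous_pow 2).add continuous_const))
    have hb2ne : ∀ r : ℝ, 2 + Real.sqrt (r ^ 2 + s ^ 2) ≠ 0 := fun r => by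
      have := Real.sqrt_nonneg (r ^ 2 + s ^ 2); positivity
    have hlogb2 : ∀ r : ℝ, 0 < Real.log (2 + Real.sqrt (r ^ 2 + s ^ 2)) := fun r =>
      Real.log_pos (by have := Real.sqrt_nonneg (r ^ 2 + s ^ 2); linarith)
    have hh_meas : Measurable (fun r : ℝ =>
        ENNReal.ofReal ((2 + Real.sqrt (r ^ 2 + s ^ 2)) ^ (-(n : ℝ) / p) *
          (Real.log (2 + Real.sqrt (r ^ 2 + s ^ 2)))⁻¹)) :=
      (((hb2.rpow_const fun r => Or.inl (hb2ne r)).mul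
        ((hb2.log hb2ne).inv₀ fun r => (hlogb2 r).ne')).measurable).ennreal_ofReal
    have key : (∫⁻ u : EuclideanSpace ℝ (Fin k),
          ENNReal.ofReal ((2 + Real.sqrt (‖u‖ ^ 2 + s ^ 2)) ^ (-(n : ℝ) / p) *
            (Real.log (2 + Real.sqrt (‖u‖ ^ 2 + s ^ 2)))⁻¹))
        = k * volume (ball (0 : EuclideanSpace ℝ (Fin k)) 1) *
          ∫⁻ y in Ioi (0:ℝ), ENNReal.ofReal (y ^ (k - 1)) *
            ENNReal.ofReal ((2 + Real.sqrt (y ^ 2 + s ^ 2)) ^ (-(n : ℝ) / p) *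
              (Real.log (2 + Real.sqrt (y ^ 2 + s ^ 2)))⁻¹) :=
      lintegral_norm_euclidean k hk _ hh_meas
    have hdiv : (∫⁻ y in Ioi (0:ℝ), ENNReal.ofReal (y ^ (k - 1)) *
        ENNReal.ofReal ((2 + Real.sqrt (y ^ 2 + s ^ 2)) ^ (-(n : ℝ) / p) *
          (Real.log (2 + Real.sqrt (y ^ 2 + s ^ 2)))⁻¹)) = ⊤ := by
      have ha1 : (1:ℝ) ≤ max 1 s := le_max_left _ _
      have has : s ≤ max 1 s := le_max_right _ _
      have hc : (0:ℝ) < (4:ℝ) ^ (-(n:ℝ) / p) := Real.rpow_pos_of_pos (by norm_num) _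
      have hlow : ∀ y ∈ Ioi (max 1 s),
          ENNReal.ofReal ((4:ℝ) ^ (-(n:ℝ) / p) * (y * Real.log (4 * y))⁻¹)
            ≤ ENNReal.ofReal (y ^ (k - 1)) *
              ENNReal.ofReal ((2 + Real.sqrt (y ^ 2 + s ^ 2)) ^ (-(n : ℝ) / p) *
                (Real.log (2 + Real.sqrt (y ^ 2 + s ^ 2)))⁻¹) := by
        intro y hy
        have hya : max 1 s < y := hy
        have hy1 : 1 < y := lt_of_le_of_lt ha1 hya
        have hy0 : (0:ℝ) < y := by linarith
        have hsy : s ≤ y := le_trans has hya.le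
        have ht0 : 0 ≤ Real.sqrt (y ^ 2 + s ^ 2) := Real.sqrt_nonneg _
        have hts : Real.sqrt (y ^ 2 + s ^ 2) ≤ 2 * y := by
          have h1 : y ^ 2 + s ^ 2 ≤ (2 * y) ^ 2 := by nlinarith
          calc Real.sqrt (y ^ 2 + s ^ 2) ≤ Real.sqrt ((2 * y) ^ 2) := Real.sqrt_le_sqrt h1
            _ = 2 * y := Real.sqrt_sq (by positivity)
        have h24 : 2 + Real.sqrt (y ^ 2 + s ^ 2) ≤ 4 * y := by linarith
        have h2t : (0:ℝ) < 2 + Real.sqrt (y ^ 2 + s ^ 2) := by linarith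
        have hlogt : 0 < Real.log (2 + Real.sqrt (y ^ 2 + s ^ 2)) :=
          Real.log_pos (by linarith)
        have hlog4 : 0 < Real.log (4 * y) := Real.log_pos (by linarith)
        rw [← ENNReal.ofReal_mul (pow_nonneg hy0.le _)]
        apply ENNReal.ofReal_le_ofReal
        have step1 : (4 * y) ^ (-(n:ℝ) / p)
            ≤ (2 + Real.sqrt (y ^ 2 + s ^ 2)) ^ (-(n:ℝ) / p) :=
          Real.rpow_le_rpow_of_nonpos h2t h24
            (by rw [neg_div]; exact neg_nonpos.2 (by positivity))
        have step2 : (Real.log (4 * y))⁻¹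
            ≤ (Real.log (2 + Real.sqrt (y ^ 2 + s ^ 2)))⁻¹ :=
          inv_anti₀ hlogt (Real.log_le_log h2t h24)
        have expand : (4 * y) ^ (-(n:ℝ) / p)
            = (4:ℝ) ^ (-(n:ℝ) / p) * y ^ (-(n:ℝ) / p) :=
          Real.mul_rpow (by norm_num) hy0.le
        have hyk : y⁻¹ ≤ y ^ (k - 1) * y ^ (-(n:ℝ) / p) := by
          rw [← Real.rpow_natCast y (k - 1), ← Real.rpow_add hy0, ← Real.rpow_neg_one y]
          apply Real.rpow_le_rpow_of_exponent_le hy1.le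
          rw [Nat.cast_sub hk]
          have hnd : -(n:ℝ) / p = -((n:ℝ) / p) := neg_div _ _
          rw [hnd]
          push_cast
          linarith
        calc (4:ℝ) ^ (-(n:ℝ) / p) * (y * Real.log (4 * y))⁻¹
            = (4:ℝ) ^ (-(n:ℝ) / p) * (y⁻¹ * (Real.log (4 * y))⁻¹) := by rw [mul_inv]
          _ ≤ (4:ℝ) ^ (-(n:ℝ) / p) * ((y ^ (k - 1) * y ^ (-(n:ℝ) / p)) *
                (Real.log (2 + Real.sqrt (y ^ 2 + s ^ 2)))⁻¹) := by
            apply mul_le_mul_of_nonneg_left _ hc.le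
            apply mul_le_mul hyk step2 (inv_nonneg.2 hlog4.le)
              (mul_nonneg (pow_nonneg hy0.le _) (Real.rpow_nonneg hy0.le _))
          _ = y ^ (k - 1) * (((4:ℝ) ^ (-(n:ℝ) / p) * y ^ (-(n:ℝ) / p)) *
                (Real.log (2 + Real.sqrt (y ^ 2 + s ^ 2)))⁻¹) := by ring
          _ ≤ y ^ (k - 1) * ((2 + Real.sqrt (y ^ 2 + s ^ 2)) ^ (-(n:ℝ) / p) *
                (Real.log (2 + Real.sqrt (y ^ 2 + s ^ 2)))⁻¹) := by
            apply mul_le_mul_of_nonneg_left _ (pow_nonneg hy0.le _)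
            apply mul_le_mul_of_nonneg_right _ (inv_nonneg.2 hlogt.le)
            rw [← expand]
            exact step1
      rw [eq_top_iff, ← aux_div ha1 hc]
      calc ∫⁻ y in Ioi (max 1 s),
            ENNReal.ofReal ((4:ℝ) ^ (-(n:ℝ) / p) * (y * Real.log (4 * y))⁻¹)
          ≤ ∫⁻ y in Ioi (max 1 s), ENNReal.ofReal (y ^ (k - 1)) *
              ENNReal.ofReal ((2 + Real.sqrt (y ^ 2 + s ^ 2)) ^ (-(n : ℝ) / p) *
                (Real.log (2 + Real.sqrt (y ^ 2 + s ^ 2)))⁻¹) :=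
          setLIntegral_mono (((measurable_id.pow_const (k-1)).ennreal_ofReal).mul hh_meas) hlow
        _ ≤ ∫⁻ y in Ioi (0:ℝ), ENNReal.ofReal (y ^ (k - 1)) *
              ENNReal.ofReal ((2 + Real.sqrt (y ^ 2 + s ^ 2)) ^ (-(n : ℝ) / p) *
                (Real.log (2 + Real.sqrt (y ^ 2 + s ^ 2)))⁻¹) :=
          lintegral_mono' (Measure.restrict_mono (Ioi_subset_Ioi (by positivity)) le_rfl)
            le_rfl
    rw [key, hdiv, ENNReal.mul_top]
    apply mul_ne_zero
    · exact Nat.cast_ne_zero.2 (by omega)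
    · exact (measure_ball_pos volume (0 : EuclideanSpace ℝ (Fin k)) one_pos).ne'
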